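/- Scaled sub-Gaussian matrix norm bound: Let x_1, ..., x_n be independent mean-zero 1-sub-Gaussian random vectors in R^d and b_1, ..., b_n fixed reals. Then there is an absolute constant C such that for any δ ∈ (0,1/2), with probability at least 1−δ, the spectral norm of the d×n matrix [x_1 ⋯ x_n]·diag(b_1,...,b_n) is at most C√(∑_{i=1}^n b_i² + (d + log(1/δ)) max_i b_i²). -/

import Mathlib

/-!
Let `A` be the matrix with columns `b j • x j`. If `N` is a `1/2`-net of the unit sphere of `ℝ^d`
(one with at most `5^d` points exists), then `‖A‖ = ‖Aᵀ‖ ≤ 2 max_{w ∈ N} ‖Aᵀ w‖`. For a fixed unit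
vector `w`, `‖Aᵀ w‖² = ∑ j, b j ^ 2 ⟪w, x j⟫²` is a sum of independent terms, and the moment bounds
`E ⟪w, x j⟫^(2k) ≤ (2k)^k` give `E exp (s ⟪w, x j⟫²) ≤ exp (4 e s)` for `4 e s ≤ 1`. A Chernoff
bound at scale `(4 e max_j b j ^ 2)⁻¹` then shows `‖Aᵀ w‖² ≤ 4 e (∑ j, b j ^ 2 + K max_j b j ^ 2)`
except with probability `e^(-K)`. A union bound over `N` with `K = 2d + log (1/δ)`, using
`5 ≤ e²`, gives the theorem with `C = 10`.
-/

open MeasureTheory ProbabilityTheory Matrix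

/-- The spectral norm (ℓ²→ℓ² operator norm) of a real matrix. -/
noncomputable def specNorm {d₁ d₂ : ℕ} (A : Matrix (Fin d₁) (Fin d₂) ℝ) : ℝ :=
  ‖LinearMap.toContinuousLinearMap (Matrix.toEuclideanLin A)‖

/-- A real random variable `X` has sub-Gaussian constant `b ≥ 0` if all its centered
absolute moments exist and satisfy `E[|X − E[X]|^p]^(1/p) ≤ b √p` for every `p ≥ 1`. -/
def HasSubgaussianConst {Ω : Type*} [MeasurableSpace Ω] (μ : Measure Ω)
    (X : Ω → ℝ) (b : ℝ) : Prop :=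
  ∀ p : ℝ, 1 ≤ p →
    Integrable (fun ω => |X ω - ∫ x, X x ∂μ| ^ p) μ ∧
    (∫ ω, |X ω - ∫ x, X x ∂μ| ^ p ∂μ) ^ (1 / p) ≤ b * Real.sqrt p

open Real Metric Module
open scoped NNReal ENNReal

section Net

variable {E : Type*} [NormedAddCommGroup E] [NormedSpace ℝ E]

lemma card_le_five_pow_of_isSeparated_sphere [FiniteDimensional ℝ E] (s : Finset E)
    (hs : (s : Set E) ⊆ sphere 0 1) (hsep : IsSeparated (2⁻¹ : ℝ≥0) (s : Set E)) :
    s.card ≤ 5 ^ finrank ℝ E := by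
  classical
  have hscale : Function.Injective (fun w : E => (2 : ℝ) • w) := smul_right_injective E two_ne_zero
  rw [← Finset.card_image_of_injective s hscale]
  refine Besicovitch.card_le_of_separated _ ?_ ?_
  · simp only [Finset.mem_image]
    rintro _ ⟨w, hw, rfl⟩
    simp [norm_smul, mem_sphere_zero_iff_norm.1 (hs hw)]
  · simp only [Finset.mem_image]
    rintro _ ⟨v, hv, rfl⟩ _ ⟨w, hw, rfl⟩ hne
    have hlt : (2⁻¹ : ℝ≥0) < nndist v w := by
      have h : ((2⁻¹ : ℝ≥0) : ℝ≥0∞) < edist v w := hsep hv hw (fun h => hne (h ▸ rfl))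
      rwa [edist_nndist, ENNReal.coe_lt_coe] at h
    replace hlt : (2⁻¹ : ℝ) < dist v w := by exact_mod_cast hlt
    rw [← smul_sub, norm_smul, ← dist_eq_norm, Real.norm_two]
    linarith

lemma encard_le_five_pow_of_isSeparated_sphere [FiniteDimensional ℝ E] {C : Set E}
    (hC : C ⊆ sphere 0 1) (hsep : IsSeparated (2⁻¹ : ℝ≥0) C) :
    C.encard ≤ 5 ^ finrank ℝ E := by
  by_contra! hlarge
  obtain ⟨t, htC, htcard⟩ := Set.exists_subset_encard_eq (Order.add_one_le_of_lt hlarge)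
  have htfin : t.Finite := Set.finite_of_encard_eq_coe htcard
  have hsmall : (htfin.toFinset.card : ℕ∞) ≤ 5 ^ finrank ℝ E := by
    exact_mod_cast card_le_five_pow_of_isSeparated_sphere htfin.toFinset
      (by simpa using htC.trans hC) (by simpa using hsep.subset htC)
  rw [← htfin.encard_eq_coe_toFinset_card, htcard] at hsmall
  exact absurd hsmall (by norm_cast; omega)

lemma exists_isCover_sphere [FiniteDimensional ℝ E] :
    ∃ N : Finset E, N.card ≤ 5 ^ finrank ℝ E ∧ (N : Set E) ⊆ sphere 0 1 ∧
      IsCover (2⁻¹ : ℝ≥0) (sphere (0 : E) 1) N := by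
  have hpack : packingNumber (2⁻¹ : ℝ≥0) (sphere (0 : E) 1) ≤ 5 ^ finrank ℝ E :=
    iSup₂_le fun C hC => iSup_le fun hsep => encard_le_five_pow_of_isSeparated_sphere hC hsep
  have hfin : packingNumber (2⁻¹ : ℝ≥0) (sphere (0 : E) 1) ≠ ⊤ :=
    ne_top_of_le_ne_top (by simp) hpack
  have hcard := (encard_maximalSeparatedSet hfin).trans_le hpack
  have hCfin := Set.finite_of_encard_le_coe hcard
  refine ⟨hCfin.toFinset, ?_, by simpa using maximalSeparatedSet_subset,
    by simpa using isCover_maximalSeparatedSet hfin⟩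
  rw [hCfin.encard_eq_coe_toFinset_card] at hcard
  exact_mod_cast hcard

lemma ContinuousLinearMap.opNorm_le_two_mul_of_isCover_sphere {F : Type*}
    [NormedAddCommGroup F] [NormedSpace ℝ F] (T : E →L[ℝ] F) {N : Set E}
    (hN : IsCover (2⁻¹ : ℝ≥0) (sphere 0 1) N) {r : ℝ} (hr : 0 ≤ r) (hT : ∀ w ∈ N, ‖T w‖ ≤ r) :
    ‖T‖ ≤ 2 * r := by
  suffices ‖T‖ ≤ r + ‖T‖ / 2 by linarith
  refine T.opNorm_le_of_unit_norm (by positivity) fun u hu => ?_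
  obtain ⟨w, hwN, huw⟩ := hN (mem_sphere_zero_iff_norm.2 hu)
  have huw' : ‖u - w‖ ≤ 2⁻¹ := by
    replace huw : nndist u w ≤ 2⁻¹ := edist_le_coe.1 huw
    rw [← dist_eq_norm]
    exact_mod_cast huw
  calc ‖T u‖ ≤ ‖T w‖ + ‖T (u - w)‖ := by rw [map_sub]; exact norm_le_insert' _ _
    _ ≤ r + ‖T‖ * 2⁻¹ := add_le_add (hT w hwN) (T.le_opNorm_of_le huw')
    _ = r + ‖T‖ / 2 := by ring

end Net

open scoped Matrix.Norms.L2Operator in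
lemma specNorm_eq_opNorm_transpose {m n : ℕ} (A : Matrix (Fin m) (Fin n) ℝ) :
    specNorm A = ‖(toEuclideanLin Aᵀ).toContinuousLinearMap‖ := by
  change ‖A‖ = ‖Aᵀ‖
  rw [← conjTranspose_eq_transpose_of_trivial, l2_opNorm_conjTranspose]

lemma norm_toEuclideanLin_transpose_of_mul_apply {d n : ℕ} (x : Fin n → Fin d → ℝ)
    (b : Fin n → ℝ) (w : EuclideanSpace ℝ (Fin d)) :
    ‖(toEuclideanLin (of fun a j => x j a * b j)ᵀ).toContinuousLinearMap w‖
      = √(∑ j, b j ^ 2 * (∑ a, w a * x j a) ^ 2) := by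
  rw [LinearMap.coe_toContinuousLinearMap', EuclideanSpace.norm_eq]
  congr 1
  refine Finset.sum_congr rfl fun j _ => ?_
  simp only [toLpLin_apply, mulVec, dotProduct, transpose_apply, of_apply,
    Real.norm_eq_abs, sq_abs]
  rw [← mul_pow, Finset.mul_sum]
  congr 1
  exact Finset.sum_congr rfl fun a _ => by ring

lemma specNorm_of_mul_le_of_isCover {d n : ℕ} (x : Fin n → Fin d → ℝ) (b : Fin n → ℝ)
    {N : Set (EuclideanSpace ℝ (Fin d))} (hN : IsCover (2⁻¹ : ℝ≥0) (sphere 0 1) N) {t : ℝ}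
    (hNt : ∀ w ∈ N, ∑ j, b j ^ 2 * (∑ a, w a * x j a) ^ 2 ≤ t) :
    specNorm (of fun a j => x j a * b j) ≤ 2 * √t := by
  rw [specNorm_eq_opNorm_transpose]
  refine ContinuousLinearMap.opNorm_le_two_mul_of_isCover_sphere _ hN (sqrt_nonneg t)
    fun w hw => ?_
  rw [norm_toEuclideanLin_transpose_of_mul_apply]
  exact sqrt_le_sqrt (hNt w hw)

lemma sum_sq_eq_one_of_norm_eq_one {d : ℕ} {w : EuclideanSpace ℝ (Fin d)} (hw : ‖w‖ = 1) :
    ∑ a, w a ^ 2 = 1 := by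
  simpa [EuclideanSpace.norm_eq, Real.norm_eq_abs, sq_abs] using hw

lemma inv_one_sub_le_exp_two_mul {q : ℝ} (hq : 0 ≤ q) (hq' : q ≤ 1 / 2) :
    (1 - q)⁻¹ ≤ exp (2 * q) := by
  have h : (1 - q)⁻¹ ≤ 1 + 2 * q := by
    rw [inv_le_iff_one_le_mul₀ (by linarith)]
    nlinarith
  linarith [add_one_le_exp (2 * q)]

lemma two_mul_pow_div_factorial_le (k : ℕ) :
    (2 * k : ℝ) ^ k / k.factorial ≤ (2 * exp 1) ^ k := by
  have h := pow_div_factorial_le_exp (k : ℝ) k.cast_nonneg k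
  rw [← exp_one_pow] at h
  rw [mul_pow, mul_pow, mul_div_assoc]
  gcongr

section Moments

variable {Ω : Type*} [MeasurableSpace Ω] {μ : Measure Ω}

def HasSubgaussianEvenMoments (μ : Measure Ω) (Y : Ω → ℝ) : Prop :=
  ∀ k : ℕ, Integrable (fun ω => |Y ω| ^ (2 * k)) μ ∧ ∫ ω, |Y ω| ^ (2 * k) ∂μ ≤ (2 * k : ℝ) ^ k

lemma HasSubgaussianConst.integrable [IsFiniteMeasure μ] {X : Ω → ℝ} {b : ℝ}
    (hX : HasSubgaussianConst μ X b) (hXm : AEStronglyMeasurable X μ) : Integrable X μ := by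
  have h := (hX 1 le_rfl).1
  simp only [rpow_one] at h
  have hcentred : Integrable (fun ω => X ω - ∫ x, X x ∂μ) μ :=
    (integrable_norm_iff (hXm.sub aestronglyMeasurable_const)).1 h
  exact (hcentred.add (integrable_const _)).congr (.of_forall fun ω => sub_add_cancel _ _)

lemma HasSubgaussianConst.hasSubgaussianEvenMoments [IsProbabilityMeasure μ] {X : Ω → ℝ}
    (hX : HasSubgaussianConst μ X 1) (hmean : ∫ ω, X ω ∂μ = 0) :
    HasSubgaussianEvenMoments μ X := by
  intro k
  rcases Nat.eq_zero_or_pos k with rfl | hk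
  · simp
  have hp : (1 : ℝ) ≤ (2 * k : ℕ) := by exact_mod_cast (by omega : 1 ≤ 2 * k)
  obtain ⟨hint, hle⟩ := hX _ hp
  simp only [hmean, sub_zero, rpow_natCast] at hint hle
  refine ⟨hint, ?_⟩
  have hnn : 0 ≤ ∫ ω, |X ω| ^ (2 * k) ∂μ := integral_nonneg fun ω => by positivity
  have hp0 : ((2 * k : ℕ) : ℝ) ≠ 0 := by positivity
  calc ∫ ω, |X ω| ^ (2 * k) ∂μ
      = ((∫ ω, |X ω| ^ (2 * k) ∂μ) ^ (1 / ((2 * k : ℕ) : ℝ))) ^ ((2 * k : ℕ) : ℝ) := by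
        rw [← rpow_mul hnn, one_div_mul_cancel hp0, rpow_one]
    _ ≤ (1 * √((2 * k : ℕ) : ℝ)) ^ ((2 * k : ℕ) : ℝ) := by gcongr
    _ = (2 * k : ℝ) ^ k := by
        rw [one_mul, rpow_natCast, pow_mul, sq_sqrt (by positivity)]
        push_cast
        ring

lemma hasSubgaussianEvenMoments_sum_mul [IsProbabilityMeasure μ] {d : ℕ} {X : Ω → Fin d → ℝ}
    (hXm : Measurable X) (hmean : ∀ a, ∫ ω, X ω a ∂μ = 0)
    (hsub : ∀ u : Fin d → ℝ, ∑ a, u a ^ 2 = 1 →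
      HasSubgaussianConst μ (fun ω => ∑ a, u a * X ω a) 1)
    {u : Fin d → ℝ} (hu : ∑ a, u a ^ 2 = 1) :
    HasSubgaussianEvenMoments μ (fun ω => ∑ a, u a * X ω a) := by
  have hcoord (a : Fin d) : Integrable (fun ω => X ω a) μ := by
    have h := hsub (Pi.single a 1) (by simp [sq, Pi.single_apply])
    simp only [Pi.single_apply, ite_mul, one_mul, zero_mul, Finset.sum_ite_eq',
      Finset.mem_univ, if_true] at h
    exact h.integrable (measurable_pi_apply a |>.comp hXm).aestronglyMeasurable
  refine (hsub u hu).hasSubgaussianEvenMoments ?_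
  rw [integral_finsetSum _ fun a _ => (hcoord a).const_mul (u a)]
  simp [integral_const_mul, hmean]

lemma HasSubgaussianEvenMoments.lintegral_exp_mul_sq_le {Y : Ω → ℝ}
    (hY : HasSubgaussianEvenMoments μ Y) (hYm : AEMeasurable Y μ) {s : ℝ} (hs : 0 ≤ s)
    (hs' : 2 * exp 1 * s < 1) :
    ∫⁻ ω, ENNReal.ofReal (exp (s * Y ω ^ 2)) ∂μ ≤ ENNReal.ofReal (1 - 2 * exp 1 * s)⁻¹ := by
  set q := 2 * exp 1 * s
  have hq : 0 ≤ q := by positivity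
  have hterm (ω : Ω) (k : ℕ) :
      (s * Y ω ^ 2) ^ k / k.factorial = s ^ k / k.factorial * |Y ω| ^ (2 * k) := by
    rw [mul_pow, pow_mul, sq_abs]
    ring
  have hexp (ω : Ω) : ENNReal.ofReal (exp (s * Y ω ^ 2)) =
      ∑' k : ℕ, ENNReal.ofReal (s ^ k / k.factorial * |Y ω| ^ (2 * k)) := by
    rw [exp_eq_exp_ℝ, NormedSpace.exp_eq_tsum_div, ENNReal.ofReal_tsum_of_nonneg
      (fun k => by positivity) (summable_pow_div_factorial _)]
    simp only [hterm]
  have hmoment (k : ℕ) :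
      ∫⁻ ω, ENNReal.ofReal (s ^ k / k.factorial * |Y ω| ^ (2 * k)) ∂μ ≤ ENNReal.ofReal (q ^ k) := by
    rw [← ofReal_integral_eq_lintegral_ofReal ((hY k).1.const_mul _)
      (Filter.Eventually.of_forall fun ω => by positivity), integral_const_mul]
    refine ENNReal.ofReal_le_ofReal ?_
    calc s ^ k / k.factorial * ∫ ω, |Y ω| ^ (2 * k) ∂μ
        ≤ s ^ k / k.factorial * (2 * k : ℝ) ^ k := by gcongr; exact (hY k).2
      _ = s ^ k * ((2 * k : ℝ) ^ k / k.factorial) := by ring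
      _ ≤ s ^ k * (2 * exp 1) ^ k := by gcongr; exact two_mul_pow_div_factorial_le k
      _ = q ^ k := by rw [← mul_pow, mul_comm]
  calc ∫⁻ ω, ENNReal.ofReal (exp (s * Y ω ^ 2)) ∂μ
      = ∑' k : ℕ, ∫⁻ ω, ENNReal.ofReal (s ^ k / k.factorial * |Y ω| ^ (2 * k)) ∂μ := by
        simp only [hexp]
        exact lintegral_tsum fun k => by fun_prop
    _ ≤ ∑' k : ℕ, ENNReal.ofReal (q ^ k) := ENNReal.tsum_le_tsum hmoment
    _ = ENNReal.ofReal (1 - q)⁻¹ := by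
        rw [← ENNReal.ofReal_tsum_of_nonneg (fun k => by positivity)
          (summable_geometric_of_lt_one hq hs'), tsum_geometric_of_lt_one hq hs']

lemma HasSubgaussianEvenMoments.integrable_exp_mul_sq {Y : Ω → ℝ}
    (hY : HasSubgaussianEvenMoments μ Y) (hYm : AEMeasurable Y μ) {s : ℝ} (hs : 0 ≤ s)
    (hs' : 2 * exp 1 * s < 1) :
    Integrable (fun ω => exp (s * Y ω ^ 2)) μ := by
  refine ⟨by fun_prop, (hasFiniteIntegral_iff_ofReal
    (Filter.Eventually.of_forall fun ω => (exp_pos _).le)).2 ?_⟩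
  exact (hY.lintegral_exp_mul_sq_le hYm hs hs').trans_lt ENNReal.ofReal_lt_top

lemma HasSubgaussianEvenMoments.integral_exp_mul_sq_le {Y : Ω → ℝ}
    (hY : HasSubgaussianEvenMoments μ Y) (hYm : AEMeasurable Y μ) {s : ℝ} (hs : 0 ≤ s)
    (hs' : 4 * exp 1 * s ≤ 1) :
    ∫ ω, exp (s * Y ω ^ 2) ∂μ ≤ exp (4 * exp 1 * s) := by
  have hq : 2 * exp 1 * s ≤ 1 / 2 := by linarith
  rw [integral_eq_lintegral_of_nonneg_ae (Filter.Eventually.of_forall fun ω => (exp_pos _).le)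
    (by fun_prop)]
  calc (∫⁻ ω, ENNReal.ofReal (exp (s * Y ω ^ 2)) ∂μ).toReal
      ≤ (1 - 2 * exp 1 * s)⁻¹ := ENNReal.toReal_le_of_le_ofReal (inv_nonneg.2 (by linarith))
        (hY.lintegral_exp_mul_sq_le hYm hs (by linarith))
    _ ≤ exp (2 * (2 * exp 1 * s)) := inv_one_sub_le_exp_two_mul (by positivity) hq
    _ = exp (4 * exp 1 * s) := by ring_nf

end Moments

section Chernoff

variable {Ω : Type*} [MeasurableSpace Ω] {μ : Measure Ω} [IsFiniteMeasure μ] {ι : Type*}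
  [Fintype ι] {Y : ι → Ω → ℝ}

lemma measure_le_sum_mul_sq_le (hYm : ∀ j, Measurable (Y j)) (hind : iIndepFun Y μ)
    (hY : ∀ j, HasSubgaussianEvenMoments μ (Y j)) {s : ι → ℝ} (hs : ∀ j, 0 ≤ s j)
    (hs' : ∀ j, 4 * exp 1 * s j ≤ 1) (ε : ℝ) :
    μ {ω | ε ≤ ∑ j, s j * Y j ω ^ 2} ≤ ENNReal.ofReal (exp (4 * exp 1 * ∑ j, s j - ε)) := by
  set Z : ι → Ω → ℝ := fun j ω => s j * Y j ω ^ 2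
  have hZm (j : ι) : Measurable (Z j) := by fun_prop
  have hZind : iIndepFun Z μ := hind.comp (fun j y => s j * y ^ 2) fun j => by fun_prop
  have hZint (j : ι) : Integrable (fun ω => exp (1 * Z j ω)) μ := by
    simpa [Z] using (hY j).integrable_exp_mul_sq (hYm j).aemeasurable (hs j)
      (by linarith [hs' j, mul_nonneg (exp_pos 1).le (hs j)])
  have hmgf (j : ι) : mgf (Z j) μ 1 ≤ exp (4 * exp 1 * s j) := by
    simpa [mgf, Z] using (hY j).integral_exp_mul_sq_le (hYm j).aemeasurable (hs j) (hs' j)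
  have hchernoff := measure_ge_le_exp_mul_mgf (X := ∑ j, Z j) (μ := μ) ε zero_le_one
    (hZind.integrable_exp_mul_sum hZm (s := Finset.univ) fun j _ => hZint j)
  rw [iIndepFun.mgf_sum hZind hZm] at hchernoff
  have hevent : {ω | ε ≤ ∑ j, s j * Y j ω ^ 2} = {ω | ε ≤ (∑ j, Z j) ω} := by
    simp only [Finset.sum_apply, Z]
  calc μ {ω | ε ≤ ∑ j, s j * Y j ω ^ 2}
      ≤ ENNReal.ofReal (exp (-1 * ε) * ∏ j, mgf (Z j) μ 1) := by
        rw [hevent]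
        exact ENNReal.le_ofReal_iff_toReal_le (measure_ne_top _ _)
          (mul_nonneg (exp_pos _).le (Finset.prod_nonneg fun j _ => mgf_nonneg)) |>.2 hchernoff
    _ ≤ ENNReal.ofReal (exp (-1 * ε) * ∏ j, exp (4 * exp 1 * s j)) := by
        gcongr with j
        · exact fun j _ => mgf_nonneg
        · exact hmgf j
    _ = ENNReal.ofReal (exp (4 * exp 1 * ∑ j, s j - ε)) := by
        rw [← exp_sum, ← exp_add, Finset.mul_sum]
        ring_nf

lemma measure_lt_sum_mul_sq_le (hYm : ∀ j, Measurable (Y j)) (hind : iIndepFun Y μ)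
    (hY : ∀ j, HasSubgaussianEvenMoments μ (Y j)) {c : ι → ℝ} (hc : ∀ j, 0 ≤ c j) {M : ℝ}
    (hM : 0 ≤ M) (hcM : ∀ j, c j ≤ M) (K : ℝ) :
    μ {ω | 4 * exp 1 * (∑ j, c j + K * M) < ∑ j, c j * Y j ω ^ 2} ≤ ENNReal.ofReal (exp (-K)) := by
  rcases hM.eq_or_lt with rfl | hMpos
  · have hc0 (j : ι) : c j = 0 := le_antisymm (hcM j) (hc j)
    simp [hc0]
  set l := (4 * exp 1 * M)⁻¹
  have hl : 0 < l := by positivity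
  have hlc (j : ι) : 4 * exp 1 * (l * c j) = c j / M := by
    simp only [l]
    field_simp
  have hbound := measure_le_sum_mul_sq_le hYm hind hY (fun j => mul_nonneg hl.le (hc j))
    (fun j => by rw [hlc, div_le_one hMpos]; exact hcM j) ((∑ j, c j) / M + K)
  have hthreshold : (∑ j, c j) / M + K = l * (4 * exp 1 * (∑ j, c j + K * M)) := by
    simp only [l]
    field_simp
  have hexponent : 4 * exp 1 * ∑ j, l * c j - ((∑ j, c j) / M + K) = -K := by
    rw [Finset.mul_sum, Finset.sum_congr rfl fun j _ => hlc j, ← Finset.sum_div]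
    ring
  rw [hexponent] at hbound
  refine le_trans (measure_mono fun ω hω => ?_) hbound
  rw [Set.mem_ofPred_eq, hthreshold, Finset.sum_congr rfl fun j _ => mul_assoc l (c j) _,
    ← Finset.mul_sum]
  exact mul_le_mul_of_nonneg_left (le_of_lt hω) hl.le

end Chernoff

lemma one_sub_le_toReal_measure {Ω : Type*} [MeasurableSpace Ω] {μ : Measure Ω}
    [IsProbabilityMeasure μ] {s : Set Ω} {δ : ℝ} (hδ : 0 ≤ δ) (hs : μ sᶜ ≤ ENNReal.ofReal δ) :
    1 - δ ≤ (μ s).toReal := by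
  have h : 1 ≤ μ s + ENNReal.ofReal δ := by
    calc 1 = μ (s ∪ sᶜ) := by rw [Set.union_compl_self, measure_univ]
      _ ≤ μ s + μ sᶜ := measure_union_le s sᶜ
      _ ≤ μ s + ENNReal.ofReal δ := by gcongr
  have := ENNReal.toReal_mono (by finiteness) h
  rw [ENNReal.toReal_add (measure_ne_top μ s) ENNReal.ofReal_ne_top, ENNReal.toReal_ofReal hδ,
    ENNReal.toReal_one] at this
  linarith

lemma measure_lt_specNorm_le {Ω : Type*} [MeasurableSpace Ω] {μ : Measure Ω}
    [IsProbabilityMeasure μ] {d n : ℕ} {x : Fin n → Ω → Fin d → ℝ} (hxm : ∀ i, Measurable (x i))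
    (hind : iIndepFun x μ) (hmean : ∀ i a, ∫ ω, x i ω a ∂μ = 0)
    (hsub : ∀ i (u : Fin d → ℝ), ∑ a, u a ^ 2 = 1 →
      HasSubgaussianConst μ (fun ω => ∑ a, u a * x i ω a) 1) (b : Fin n → ℝ) (K : ℝ) :
    μ {ω | 2 * √(4 * exp 1 * (∑ j, b j ^ 2 + K * ⨆ j, b j ^ 2))
        < specNorm (of fun a j => x j ω a * b j)} ≤ ENNReal.ofReal (5 ^ d * exp (-K)) := by
  obtain ⟨N, hNcard, hNsphere, hNcover⟩ := exists_isCover_sphere (E := EuclideanSpace ℝ (Fin d))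
  rw [finrank_euclideanSpace_fin] at hNcard
  set t := 4 * exp 1 * (∑ j, b j ^ 2 + K * ⨆ j, b j ^ 2)
  set bad : EuclideanSpace ℝ (Fin d) → Set Ω :=
    fun w => {ω | t < ∑ j, b j ^ 2 * (∑ a, w a * x j ω a) ^ 2}
  have hcover : {ω | 2 * √t < specNorm (of fun a j => x j ω a * b j)} ⊆ ⋃ w ∈ N, bad w := by
    intro ω hω
    by_contra hgood
    simp only [Set.mem_iUnion, not_exists, bad, Set.mem_ofPred_eq, not_lt] at hgood
    exact (specNorm_of_mul_le_of_isCover (fun j => x j ω) b hNcover hgood).not_gt hω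
  have hbad (w : EuclideanSpace ℝ (Fin d)) (hw : w ∈ N) :
      μ (bad w) ≤ ENNReal.ofReal (exp (-K)) := by
    have hu := sum_sq_eq_one_of_norm_eq_one (mem_sphere_zero_iff_norm.1 (hNsphere hw))
    exact measure_lt_sum_mul_sq_le (fun j => by fun_prop)
      (hind.comp (fun j v => ∑ a, w a * v a) fun j => by fun_prop)
      (fun j => hasSubgaussianEvenMoments_sum_mul (hxm j) (hmean j) (hsub j) hu)
      (fun j => sq_nonneg _) (Real.iSup_nonneg fun j => sq_nonneg _)
      (fun j => le_ciSup (f := fun i => b i ^ 2) (Finite.bddAbove_range _) j) K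
  calc μ {ω | 2 * √t < specNorm (of fun a j => x j ω a * b j)}
      ≤ ∑ w ∈ N, μ (bad w) := (measure_mono hcover).trans (measure_biUnion_finset_le N bad)
    _ ≤ ∑ w ∈ N, ENNReal.ofReal (exp (-K)) := Finset.sum_le_sum hbad
    _ ≤ ENNReal.ofReal (5 ^ d * exp (-K)) := by
        rw [Finset.sum_const, nsmul_eq_mul, ENNReal.ofReal_mul (by positivity),
          ENNReal.ofReal_pow (by norm_num)]
        gcongr
        exact_mod_cast hNcard

lemma five_le_exp_two : (5 : ℝ) ≤ exp 2 := by
  have h := exp_one_gt_d9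
  rw [show (2 : ℝ) = 1 + 1 by norm_num, exp_add]
  nlinarith

lemma five_pow_mul_exp_neg_le (d : ℕ) {δ : ℝ} (hδ : 0 < δ) :
    5 ^ d * exp (-(2 * d + log (1 / δ))) ≤ δ := by
  have h5 : (5 : ℝ) ^ d ≤ exp (2 * d) := by
    rw [mul_comm, exp_nat_mul]
    exact pow_le_pow_left₀ (by norm_num) five_le_exp_two d
  rw [neg_add, exp_add, exp_neg (log _), exp_log (by positivity), one_div, inv_inv, ← mul_assoc]
  calc 5 ^ d * exp (-(2 * d)) * δ ≤ exp (2 * d) * exp (-(2 * d)) * δ := by gcongr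
    _ = δ := by rw [← exp_add, add_neg_cancel, exp_zero, one_mul]

lemma two_mul_sqrt_le_ten_mul_sqrt (d : ℕ) {B M L : ℝ} (hB : 0 ≤ B) (hM : 0 ≤ M) (hL : 0 ≤ L) :
    2 * √(4 * exp 1 * (B + (2 * d + L) * M)) ≤ 10 * √(B + (d + L) * M) := by
  have he : exp 1 < 2.72 := lt_trans exp_one_lt_d9 (by norm_num)
  have hX : B + (2 * d + L) * M ≤ 2 * (B + (d + L) * M) := by nlinarith
  have hsq (c a : ℝ) (hc : 0 ≤ c) : c * √a = √(c ^ 2 * a) := by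
    rw [sqrt_mul (sq_nonneg c), sqrt_sq hc]
  rw [hsq 2 _ zero_le_two, hsq 10 _ (by norm_num)]
  refine sqrt_le_sqrt ?_
  calc 2 ^ 2 * (4 * exp 1 * (B + (2 * d + L) * M))
      ≤ 2 ^ 2 * (4 * 2.72 * (2 * (B + (d + L) * M))) := by gcongr
    _ ≤ 10 ^ 2 * (B + (d + L) * M) := by nlinarith

/-- Scaled sub-Gaussian matrix norm bound. Let `x_1, ..., x_n` be independent
mean-zero `1`-sub-Gaussian random vectors in `ℝ^d` and `b_1, ..., b_n` fixed reals. Then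
there is an absolute constant `C` such that for any `δ ∈ (0,1/2)`, with probability at
least `1 − δ`, the spectral norm of the `d×n` matrix `[x_1 ⋯ x_n] diag(b_1,...,b_n)`
(whose `j`-th column is `b_j x_j`) is at most
`C √(∑ b_i² + (d + log(1/δ)) max_i b_i²)`. -/
theorem stmt14 :
    ∃ C : ℝ, 0 < C ∧
      ∀ (d n : ℕ) (Ω : Type) (_ : MeasurableSpace Ω) (μ : Measure Ω),
        IsProbabilityMeasure μ →
        ∀ (x : Fin n → Ω → Fin d → ℝ) (b : Fin n → ℝ),
          (∀ i, Measurable (x i)) →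
          iIndepFun x μ →
          (∀ i j, (∫ ω, x i ω j ∂μ) = 0) →
          (∀ i (u : Fin d → ℝ), (∑ j, (u j) ^ 2) = 1 →
            HasSubgaussianConst μ (fun ω => ∑ j, u j * x i ω j) 1) →
          ∀ δ : ℝ, 0 < δ → δ < 1 / 2 →
            1 - δ ≤ (μ {ω | specNorm (Matrix.of fun (a : Fin d) (j : Fin n) => x j ω a * b j)
              ≤ C * Real.sqrt ((∑ i, (b i) ^ 2)
                  + (d + Real.log (1 / δ)) * (⨆ i, (b i) ^ 2))}).toReal := by
  refine ⟨10, by norm_num, fun d n Ω _ μ _ x b hxm hind hmean hsub δ hδ hδ2 => ?_⟩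
  have hL : 0 ≤ log (1 / δ) := log_nonneg (by rw [le_div_iff₀ hδ]; linarith)
  refine one_sub_le_toReal_measure hδ.le ?_
  calc μ {ω | specNorm (of fun a j => x j ω a * b j)
          ≤ 10 * √(∑ i, b i ^ 2 + (d + log (1 / δ)) * ⨆ i, b i ^ 2)}ᶜ
      ≤ μ {ω | 2 * √(4 * exp 1 * (∑ j, b j ^ 2 + (2 * d + log (1 / δ)) * ⨆ j, b j ^ 2))
          < specNorm (of fun a j => x j ω a * b j)} := by
        refine measure_mono fun ω hω => ?_
        simp only [Set.mem_compl_iff, Set.mem_ofPred_eq, not_le] at hω ⊢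
        refine lt_of_le_of_lt (two_mul_sqrt_le_ten_mul_sqrt d ?_ ?_ hL) hω
        · exact Finset.sum_nonneg fun i _ => sq_nonneg _
        · exact Real.iSup_nonneg fun i => sq_nonneg _
    _ ≤ ENNReal.ofReal (5 ^ d * exp (-(2 * d + log (1 / δ)))) :=
        measure_lt_specNorm_le hxm hind hmean hsub b _
    _ ≤ ENNReal.ofReal δ := ENNReal.ofReal_le_ofReal (five_pow_mul_exp_neg_le d hδ)
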